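/- arXiv:2010.13566 — 4 statements merged into one kernel-verified Lean document; each statement's English description precedes it below -/
import Mathlib

section
/- Let ℓ be a positive natural number and A ⊆ (Fin ℓ → ℝ) a nonempty closed set such that for every coordinate i, the set {p i | p ∈ A} ⊆ ℝ is bounded above. Then for every q ∈ A there exists p ∈ A with q ≤ p such that p is Pareto-maximal in A, i.e., for all p' ∈ A, p ≤ p' implies p' = p. -/
theorem exists_pareto_maximal (ℓ : ℕ) (hℓ : 0 < ℓ) (A : Set (Fin ℓ → ℝ))
    (hne : A.Nonempty) (hcl : IsClosed A)
    (hbdd : ∀ i : Fin ℓ, BddAbove {x : ℝ | ∃ p ∈ A, x = p i}) :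
    ∀ q ∈ A, ∃ p ∈ A, q ≤ p ∧ ∀ p' ∈ A, p ≤ p' → p' = p := by
  intro q hq
  set b : Fin ℓ → ℝ := fun i => sSup {x : ℝ | ∃ p ∈ A, x = p i} with hb
  have hle_b : ∀ p ∈ A, p ≤ b := by
    intro p hp i
    exact le_csSup (hbdd i) ⟨p, hp, rfl⟩
  set B : Set (Fin ℓ → ℝ) := A ∩ Set.Icc q b with hB
  have hBne : B.Nonempty := ⟨q, hq, le_refl q, hle_b q hq⟩
  have hBcomp : IsCompact B := by
    have : IsCompact (Set.Icc q b) := isCompact_Icc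
    exact this.of_isClosed_subset (hcl.inter isClosed_Icc) Set.inter_subset_right
  have hfcont : Continuous (fun p : Fin ℓ → ℝ => ∑ i, p i) :=
    continuous_finset_sum _ fun i _ => continuous_apply i
  obtain ⟨p, hpB, hpmax⟩ := hBcomp.exists_isMaxOn hBne hfcont.continuousOn
  obtain ⟨hpA, hqp, hpb⟩ := hpB
  refine ⟨p, hpA, hqp, ?_⟩
  intro p' hp'A hpp'
  have hp'B : p' ∈ B := ⟨hp'A, le_trans hqp hpp', hle_b p' hp'A⟩
  have hsum : ∑ i, p' i ≤ ∑ i, p i := hpmax hp'B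
  have : ∀ i ∈ Finset.univ, p i = p' i := by
    rw [← Finset.sum_eq_sum_iff_of_le (fun i _ => hpp' i)]
    exact le_antisymm (Finset.sum_le_sum fun i _ => hpp' i) hsum
  funext i
  exact (this i (Finset.mem_univ i)).symm
end

section
/- Let ℓ be a positive natural number and A ⊆ (Fin ℓ → ℝ) a downward closed set such that for every coordinate i, the set {p i | p ∈ A} ⊆ ℝ is bounded above. Define the Pareto front Pareto(A) = {p ∈ closure A | ∀ p' ∈ closure A, p ≤ p' → p' = p}. Then A is closed if and only if every point of Pareto(A) belongs to A. -/
theorem closed_iff_pareto_subset (ℓ : ℕ) (hℓ : 0 < ℓ) (A : Set (Fin ℓ → ℝ))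
    (hdown : ∀ p ∈ A, ∀ q : Fin ℓ → ℝ, q ≤ p → q ∈ A)
    (hbdd : ∀ i : Fin ℓ, BddAbove {x : ℝ | ∃ p ∈ A, x = p i}) :
    IsClosed A ↔
      ∀ p ∈ {p ∈ closure A | ∀ p' ∈ closure A, p ≤ p' → p' = p}, p ∈ A := by
  constructor
  · intro hA p hp
    exact hA.closure_eq ▸ hp.1
  · intro hpar
    rw [← closure_subset_iff_isClosed]
    intro p hp
    set B : Fin ℓ → ℝ := fun i => sSup {x : ℝ | ∃ p ∈ A, x = p i} with hB
    have hub : ∀ q ∈ closure A, ∀ i, q i ≤ B i := by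
      intro q hq i
      have hcl : closure A ⊆ {r : Fin ℓ → ℝ | r i ≤ B i} := by
        apply closure_minimal
        · intro a ha
          exact le_csSup (hbdd i) ⟨a, ha, rfl⟩
        · exact isClosed_le (continuous_apply i) continuous_const
      exact hcl hq
    have hpB : p ≤ B := fun i => hub p hp i
    set S : Set (Fin ℓ → ℝ) := closure A ∩ Set.Icc p B with hS
    have hScomp : IsCompact S := isCompact_Icc.inter_left isClosed_closure
    have hSne : S.Nonempty := ⟨p, hp, le_refl p, hpB⟩
    have hcont : Continuous (fun q : Fin ℓ → ℝ => ∑ i, q i) :=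
      continuous_finset_sum _ fun i _ => continuous_apply i
    obtain ⟨m, hmS, hmax⟩ := hScomp.exists_isMaxOn hSne hcont.continuousOn
    have hmPareto : m ∈ closure A ∧ ∀ p' ∈ closure A, m ≤ p' → p' = m := by
      refine ⟨hmS.1, fun p' hp' hle => ?_⟩
      have hp'S : p' ∈ S := ⟨hp', le_trans hmS.2.1 hle, fun i => hub p' hp' i⟩
      have h1 : ∑ i, p' i ≤ ∑ i, m i := hmax hp'S
      have h2 : ∑ i, m i ≤ ∑ i, p' i :=
        Finset.sum_le_sum fun i _ => hle i
      have heq : ∑ i, m i = ∑ i, p' i := le_antisymm h2 h1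
      have := (Finset.sum_eq_sum_iff_of_le (fun i _ => hle i)).mp heq
      funext i
      exact (this i (Finset.mem_univ i)).symm
    have hmA : m ∈ A := hpar m ⟨hmPareto.1, hmPareto.2⟩
    exact hdown m hmA p hmS.2.1
end

section
/- Let ℓ be a positive natural number and A ⊆ (Fin ℓ → ℝ) a nonempty, convex, downward closed set such that for every coordinate i, the set {p i | p ∈ A} ⊆ ℝ is bounded above. Define the Pareto front Pareto(A) = {p ∈ closure A | ∀ p' ∈ closure A, p ≤ p' → p' = p}. Then the downward convex hull of the Pareto front equals the closure of A: {q : Fin ℓ → ℝ | ∃ p ∈ convexHull ℝ (Pareto(A)), q ≤ p} = closure A. -/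
/-! Every point of `closure A` lies below a Pareto point: by Zorn's lemma, since a chain in
`closure A` is bounded above and monotone convergence puts its supremum in its closure. Conversely
the convex hull of the Pareto front stays in the closed convex set `closure A`, which is again
downward closed because `A` is. -/

open Set Filter

theorem DirectedOn.isLUB_mem_closure {α : Type*} [Preorder α] [TopologicalSpace α]
    [SupConvergenceClass α] {s : Set α} {a : α} (hs : DirectedOn (· ≤ ·) s) (hne : s.Nonempty)
    (ha : IsLUB s a) : a ∈ closure s := by
  have : Nonempty s := hne.to_subtype
  have : IsDirectedOrder s := hs.isDirectedOrder
  exact mem_closure_of_tendsto (SupConvergenceClass.tendsto_coe_atTop_isLUB a s ha)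
    (Eventually.of_forall Subtype.prop)

theorem IsClosed.exists_le_maximal {α : Type*} [ConditionallyCompleteLattice α]
    [TopologicalSpace α] [SupConvergenceClass α] {s : Set α} (hs : IsClosed s)
    (hbdd : BddAbove s) {x : α} (hx : x ∈ s) : ∃ m, x ≤ m ∧ Maximal (· ∈ s) m := by
  refine zorn_le_nonempty₀ s (fun c hcs hc y hy => ⟨sSup c, ?_, fun z hz => ?_⟩) x hx
  · have hlub : IsLUB c (sSup c) := isLUB_csSup ⟨y, hy⟩ (hbdd.mono hcs)
    exact closure_minimal hcs hs (hc.directedOn.isLUB_mem_closure ⟨y, hy⟩ hlub)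
  · exact le_csSup (hbdd.mono hcs) hz

theorem IsLowerSet.lowerClosure_convexHull_maximal_eq {𝕜 E : Type*} [Semiring 𝕜]
    [PartialOrder 𝕜] [AddCommMonoid E] [Module 𝕜 E] [Preorder E] {s : Set E}
    (hs : IsLowerSet s) (hconv : Convex 𝕜 s)
    (hmax : ∀ x ∈ s, ∃ m, x ≤ m ∧ Maximal (· ∈ s) m) :
    (lowerClosure (convexHull 𝕜 {x | Maximal (· ∈ s) x}) : Set E) = s := by
  refine (lowerClosure_min (convexHull_min (fun x hx => hx.prop) hconv) hs).antisymm ?_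
  intro x hx
  obtain ⟨m, hxm, hm⟩ := hmax x hx
  exact ⟨m, subset_convexHull 𝕜 _ hm, hxm⟩

theorem downset_pareto_eq_closure_general (ℓ : ℕ) (A : Set (Fin ℓ → ℝ))
    (hconv : Convex ℝ A)
    (hdown : ∀ p ∈ A, ∀ q : Fin ℓ → ℝ, q ≤ p → q ∈ A)
    (hbdd : ∀ i : Fin ℓ, BddAbove {x : ℝ | ∃ p ∈ A, x = p i}) :
    {q : Fin ℓ → ℝ |
        ∃ p ∈ convexHull ℝ {p ∈ closure A | ∀ p' ∈ closure A, p ≤ p' → p' = p},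
          q ≤ p} = closure A := by
  have hlower : IsLowerSet (closure A) :=
    IsLowerSet.closure fun p q hqp hp => hdown p hp q hqp
  have hbddA : BddAbove A := bddAbove_pi.2 fun i =>
    (hbdd i).mono (by rintro _ ⟨p, hp, rfl⟩; exact ⟨p, hp, rfl⟩)
  have hpareto : {p ∈ closure A | ∀ p' ∈ closure A, p ≤ p' → p' = p} =
      {p | Maximal (· ∈ closure A) p} :=
    ext fun p => (and_congr_right fun _ => forall₂_congr fun _ _ => imp_congr_right fun _ =>
      eq_comm).trans maximal_iff.symm
  rw [hpareto]
  -- the left-hand side is `lowerClosure (convexHull ℝ _)` unfolded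
  exact hlower.lowerClosure_convexHull_maximal_eq hconv.closure
    fun x => isClosed_closure.exists_le_maximal hbddA.closure

theorem downset_pareto_eq_closure (ℓ : ℕ) (hℓ : 0 < ℓ) (A : Set (Fin ℓ → ℝ))
    (hne : A.Nonempty) (hconv : Convex ℝ A)
    (hdown : ∀ p ∈ A, ∀ q : Fin ℓ → ℝ, q ≤ p → q ∈ A)
    (hbdd : ∀ i : Fin ℓ, BddAbove {x : ℝ | ∃ p ∈ A, x = p i}) :
    {q : Fin ℓ → ℝ |
        ∃ p ∈ convexHull ℝ {p ∈ closure A | ∀ p' ∈ closure A, p ≤ p' → p' = p},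
          q ≤ p} = closure A :=
  downset_pareto_eq_closure_general ℓ A hconv hdown hbdd
end

section
/- Let ℓ be a positive natural number and A ⊆ (Fin ℓ → ℝ) a nonempty, closed, convex, downward closed set, and let q : Fin ℓ → ℝ with q ∉ A. Then there exists a weight vector w : Fin ℓ → ℝ with w i ≥ 0 for all i and w ≠ 0 such that ∑ i, w i * a i < ∑ i, w i * q i for all a ∈ A. -/
theorem separation_nonneg_weights (ℓ : ℕ) (hℓ : 0 < ℓ) (A : Set (Fin ℓ → ℝ))
    (hne : A.Nonempty) (hcl : IsClosed A) (hconv : Convex ℝ A)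
    (hdown : ∀ p ∈ A, ∀ q : Fin ℓ → ℝ, q ≤ p → q ∈ A)
    (q : Fin ℓ → ℝ) (hq : q ∉ A) :
    ∃ w : Fin ℓ → ℝ, (∀ i, 0 ≤ w i) ∧ w ≠ 0 ∧
      ∀ a ∈ A, ∑ i, w i * a i < ∑ i, w i * q i := by
  obtain ⟨f, s, hfa, hsq⟩ := geometric_hahn_banach_closed_point hconv hcl hq
  set w : Fin ℓ → ℝ := fun i => f (Pi.single i 1) with hw
  have hsingle : ∀ i : Fin ℓ, (Pi.single i 1 : Fin ℓ → ℝ) = fun j => if i = j then 1 else 0 := by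
    intro i; funext j; simp [Pi.single_apply, eq_comm]
  have hfw : ∀ x : Fin ℓ → ℝ, f x = ∑ i, w i * x i := by
    intro x
    conv_lhs => rw [pi_eq_sum_univ x]
    rw [map_sum]
    refine Finset.sum_congr rfl fun i _ => ?_
    rw [map_smul, smul_eq_mul, mul_comm, hw]
    simp only [hsingle]
  obtain ⟨a0, ha0⟩ := hne
  have hwnn : ∀ i, 0 ≤ w i := by
    intro i
    by_contra h
    push_neg at h
    have h1 : 0 < -w i := by linarith
    set t : ℝ := (s - f a0) / (-w i) + 1 with ht
    have h2 : 0 ≤ (s - f a0) / (-w i) := div_nonneg (by linarith [hfa a0 ha0]) h1.le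
    have htpos : 0 < t := by rw [ht]; linarith
    set b : Fin ℓ → ℝ := a0 - t • (Pi.single i 1 : Fin ℓ → ℝ) with hb
    have hmem : b ∈ A := by
      refine hdown a0 ha0 _ fun j => ?_
      rw [hb]
      simp only [Pi.sub_apply, Pi.smul_apply, Pi.single_apply, smul_eq_mul]
      by_cases hji : j = i
      · simp [hji]; nlinarith
      · simp [hji]
    have hlt := hfa _ hmem
    rw [hb, map_sub, map_smul, smul_eq_mul] at hlt
    have hfe : f (Pi.single i 1) = w i := rfl
    rw [hfe] at hlt
    have h3 : t * (-w i) < s - f a0 := by linarith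
    have h4 : t < (s - f a0) / (-w i) := (lt_div_iff₀ h1).mpr (by linarith)
    rw [ht] at h4
    linarith
  refine ⟨w, hwnn, ?_, fun a ha => ?_⟩
  · intro h0
    have h5 := hfa a0 ha0
    have hq' := hsq
    rw [hfw a0] at h5
    rw [hfw q] at hq'
    simp only [h0, Pi.zero_apply, zero_mul, Finset.sum_const_zero] at h5 hq'
    linarith
  · have h1 := hfa a ha
    rw [hfw a] at h1
    rw [hfw q] at hsq
    linarith
end
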